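/- Let h ∈ ℝⁿ be a random vector with i.i.d. standard normal entries and let c > 0. Then E( max_{x ∈ Bₙ} exp( c·hᵀx ) ) = ( 2·exp( c²/(2n) )·Φ( c/√n ) )ⁿ, where Φ denotes the standard normal cumulative distribution function. -/

import Mathlib

open MeasureTheory ProbabilityTheory Real

noncomputable section

def cube (n : ℕ) : Set (Fin n → ℝ) :=
  {x | ∀ i, x i = 1 / Real.sqrt n ∨ x i = -(1 / Real.sqrt n)}

/-- The standard normal cumulative distribution function. -/
def Phi (t : ℝ) : ℝ := ((gaussianReal 0 1) (Set.Iic t)).toReal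

instance : NullSingletonClass (gaussianReal 0 1) :=
  ⟨fun x => gaussianReal_absolutelyContinuous 0 one_ne_zero (volume_singleton)⟩

lemma map_neg_gauss : (gaussianReal 0 1).map (fun x => -x) = gaussianReal 0 1 := by
  have h := gaussianReal_map_const_mul (μ := 0) (v := 1) (-1)
  have h2 : (⟨(-1:ℝ)^2, sq_nonneg _⟩ : NNReal) = 1 := by ext; norm_num
  simp only [neg_one_mul, mul_zero, h2, one_mul] at h
  convert h using 2
  ext
  simp

lemma gauss_Ioi (a : ℝ) : gaussianReal a 1 (Set.Ioi 0) = gaussianReal 0 1 (Set.Iic a) := by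
  have h1 : gaussianReal a 1 = (gaussianReal 0 1).map (· + a) := by
    simpa using (gaussianReal_map_add_const (μ := 0) (v := 1) a).symm
  have hpre : (· + a) ⁻¹' (Set.Ioi 0) = Set.Ioi (-a) := by
    ext x; simp [neg_lt]
  rw [h1, Measure.map_apply (measurable_add_const a) measurableSet_Ioi, hpre]
  have h2 : gaussianReal 0 1 (Set.Iic a) = gaussianReal 0 1 (Set.Ici (-a)) := by
    conv_lhs => rw [← map_neg_gauss]
    rw [Measure.map_apply measurable_neg measurableSet_Iic]
    congr 1
    ext x; simp [neg_le]
  rw [h2, ← measure_congr (Ioi_ae_eq_Ici (a := -a))]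

lemma gauss_Iic (a : ℝ) : gaussianReal (-a) 1 (Set.Iic 0) = gaussianReal 0 1 (Set.Iic a) := by
  have h1 : gaussianReal (-a) 1 = (gaussianReal 0 1).map (· + (-a)) := by
    simpa using (gaussianReal_map_add_const (μ := 0) (v := 1) (-a)).symm
  have hpre : (· + (-a)) ⁻¹' (Set.Iic 0) = Set.Iic a := by
    ext x; simp [← sub_eq_add_neg, sub_nonpos]
  rw [h1, Measure.map_apply (measurable_add_const (-a)) measurableSet_Iic, hpre]


lemma integral_gauss_eq (g : ℝ → ℝ) :
    ∫ x, g x ∂(gaussianReal 0 1) = ∫ x, gaussianPDFReal 0 1 x * g x := by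
  rw [gaussianReal_of_var_ne_zero 0 one_ne_zero]
  have hd : gaussianPDF 0 1 = fun x => ((gaussianPDFReal 0 1 x).toNNReal : ENNReal) := rfl
  rw [hd, integral_withDensity_eq_integral_smul (measurable_gaussianPDFReal 0 1).real_toNNReal]
  congr 1
  funext x
  rw [NNReal.smul_def, Real.coe_toNNReal _ (gaussianPDFReal_nonneg 0 1 x), smul_eq_mul]

lemma pdf_shift (a x : ℝ) (hx : 0 ≤ x) :
    gaussianPDFReal 0 1 x * Real.exp (a * |x|) =
      Real.exp (a ^ 2 / 2) * gaussianPDFReal a 1 x := by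
  simp only [gaussianPDFReal, NNReal.coe_one, mul_one, sub_zero, abs_of_nonneg hx]
  rw [mul_assoc, ← Real.exp_add, mul_comm (Real.exp _), mul_assoc, ← Real.exp_add]
  congr 1
  ring

lemma pdf_shift_neg (a x : ℝ) (hx : x ≤ 0) :
    gaussianPDFReal 0 1 x * Real.exp (a * |x|) =
      Real.exp (a ^ 2 / 2) * gaussianPDFReal (-a) 1 x := by
  simp only [gaussianPDFReal, NNReal.coe_one, mul_one, sub_zero, abs_of_nonpos hx]
  rw [mul_assoc, ← Real.exp_add, mul_comm (Real.exp _), mul_assoc, ← Real.exp_add]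
  congr 1
  ring

lemma setIntegral_pdf (m : ℝ) (s : Set ℝ) (hs : MeasurableSet s) :
    ∫ x in s, gaussianPDFReal m 1 x = (gaussianReal m 1 s).toReal := by
  rw [gaussianReal_apply_eq_integral m one_ne_zero s, ENNReal.toReal_ofReal]
  exact setIntegral_nonneg hs (fun x _ => gaussianPDFReal_nonneg _ _ _)


lemma gauss_abs_integral (a : ℝ) :
    ∫ x, Real.exp (a * |x|) ∂(gaussianReal 0 1) = 2 * Real.exp (a ^ 2 / 2) * Phi a := by
  rw [integral_gauss_eq]
  set f : ℝ → ℝ := fun x => gaussianPDFReal 0 1 x * Real.exp (a * |x|) with hf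
  have hfm : AEStronglyMeasurable f volume :=
    ((measurable_gaussianPDFReal 0 1).mul
      ((measurable_const.mul measurable_abs).exp)).aestronglyMeasurable
  have hint : Integrable f := by
    refine Integrable.mono'
      (((integrable_gaussianPDFReal a 1).add (integrable_gaussianPDFReal (-a) 1)).const_mul
        (Real.exp (a ^ 2 / 2))) hfm (ae_of_all _ fun x => ?_)
    have hfnn : 0 ≤ f x :=
      mul_nonneg (gaussianPDFReal_nonneg 0 1 x) (Real.exp_nonneg _)
    rw [Real.norm_eq_abs, abs_of_nonneg hfnn]
    rcases le_total x 0 with hx | hx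
    · rw [hf]; simp only
      rw [pdf_shift_neg a x hx, Pi.add_apply, mul_add]
      have : 0 ≤ Real.exp (a ^ 2 / 2) * gaussianPDFReal a 1 x :=
        mul_nonneg (Real.exp_nonneg _) (gaussianPDFReal_nonneg _ _ _)
      linarith
    · rw [hf]; simp only
      rw [pdf_shift a x hx, Pi.add_apply, mul_add]
      have : 0 ≤ Real.exp (a ^ 2 / 2) * gaussianPDFReal (-a) 1 x :=
        mul_nonneg (Real.exp_nonneg _) (gaussianPDFReal_nonneg _ _ _)
      linarith
  rw [← intervalIntegral.integral_Iic_add_Ioi (b := 0) hint.integrableOn hint.integrableOn]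
  have h1 : ∫ x in Set.Iic (0:ℝ), f x = Real.exp (a ^ 2 / 2) * Phi a := by
    rw [setIntegral_congr_fun measurableSet_Iic
      (fun x (hx : x ∈ Set.Iic (0:ℝ)) => pdf_shift_neg a x hx),
      integral_const_mul, setIntegral_pdf _ _ measurableSet_Iic, gauss_Iic]
    rfl
  have h2 : ∫ x in Set.Ioi (0:ℝ), f x = Real.exp (a ^ 2 / 2) * Phi a := by
    rw [setIntegral_congr_fun measurableSet_Ioi
      (fun x (hx : x ∈ Set.Ioi (0:ℝ)) => pdf_shift a x hx.le),
      integral_const_mul, setIntegral_pdf _ _ measurableSet_Ioi, gauss_Ioi]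
    rfl
  rw [h1, h2]; ring


lemma sup_cube {n : ℕ} (hn : 0 < n) {c : ℝ} (hc : 0 < c) (v : Fin n → ℝ) :
    (⨆ x : cube n, Real.exp (c * ∑ i, v i * x.val i)) =
      Real.exp ((c / Real.sqrt n) * ∑ i, |v i|) := by
  set s : ℝ := Real.sqrt n with hs
  have hspos : 0 < s := Real.sqrt_pos.2 (by exact_mod_cast hn)
  set x₀ : cube n := ⟨fun i => if 0 ≤ v i then 1 / s else -(1 / s),
    fun i => by by_cases h : 0 ≤ v i <;> simp [h, hs]⟩ with hx₀
  haveI : Nonempty (cube n) := ⟨x₀⟩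
  have hsum : ∑ i, v i * x₀.val i = (∑ i, |v i|) / s := by
    rw [Finset.sum_div]
    refine Finset.sum_congr rfl fun i _ => ?_
    show v i * (if 0 ≤ v i then 1 / s else -(1 / s)) = |v i| / s
    by_cases h : 0 ≤ v i
    · rw [if_pos h, abs_of_nonneg h, mul_one_div]
    · rw [if_neg h, abs_of_neg (lt_of_not_ge h), mul_neg, mul_one_div, neg_div]
  have hbound : ∀ x : cube n, c * ∑ i, v i * x.val i ≤ (c / s) * ∑ i, |v i| := by
    intro x
    have h1 : ∑ i, v i * x.val i ≤ (∑ i, |v i|) / s := by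
      rw [Finset.sum_div]
      refine Finset.sum_le_sum fun i _ => ?_
      rcases x.2 i with h | h <;> rw [h]
      · rw [mul_one_div]
        gcongr
        exact le_abs_self _
      · rw [mul_neg, mul_one_div, ← neg_div]
        gcongr
        exact neg_le_abs _
    calc c * ∑ i, v i * x.val i ≤ c * ((∑ i, |v i|) / s) :=
          mul_le_mul_of_nonneg_left h1 hc.le
      _ = (c / s) * ∑ i, |v i| := by ring
  have hbdd : BddAbove (Set.range fun x : cube n =>
      Real.exp (c * ∑ i, v i * x.val i)) := by
    refine ⟨Real.exp ((c / s) * ∑ i, |v i|), ?_⟩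
    rintro y ⟨x, rfl⟩
    exact Real.exp_le_exp.2 (hbound x)
  refine le_antisymm (ciSup_le fun x => Real.exp_le_exp.2 (hbound x)) ?_
  have := le_ciSup hbdd x₀
  rw [hsum] at this
  convert this using 2
  ring


theorem stmt10 {Ω : Type*} [MeasurableSpace Ω] (μ : Measure Ω) [IsProbabilityMeasure μ]
    (n : ℕ) (h : Ω → Fin n → ℝ)
    (hind : iIndepFun (fun (i : Fin n) ω => h ω i) μ)
    (hhd : ∀ i, Measure.map (fun ω => h ω i) μ = gaussianReal 0 1)
    (c : ℝ) (hc : 0 < c) :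
    (∫ ω, (⨆ x : cube n, Real.exp (c * ∑ i, h ω i * x.val i)) ∂μ) =
    (2 * Real.exp (c ^ 2 / (2 * n)) * Phi (c / Real.sqrt n)) ^ n := by
  rcases Nat.eq_zero_or_pos n with rfl | hn
  · haveI : Nonempty (cube 0) := ⟨⟨fun i => i.elim0, fun i => i.elim0⟩⟩
    simp [ciSup_const]
  set a : ℝ := c / Real.sqrt n with ha
  -- measurable modifications
  have hmeas : ∀ i, AEMeasurable (fun ω => h ω i) μ := fun i =>
    aemeasurable_of_map_neZero (by rw [hhd i]; infer_instance)
  set g : Fin n → Ω → ℝ := fun i => (hmeas i).mk _ with hg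
  have hgmeas : ∀ i, Measurable (g i) := fun i => (hmeas i).measurable_mk
  have hgae : ∀ i, (fun ω => h ω i) =ᵐ[μ] g i := fun i => (hmeas i).ae_eq_mk
  have hae : ∀ᵐ ω ∂μ, ∀ i : Fin n, h ω i = g i ω := ae_all_iff.2 fun i => hgae i
  -- independence of modifications
  have hind' : iIndepFun g μ := by
    rw [iIndepFun_iff_measure_inter_preimage_eq_mul] at hind ⊢
    intro S sets hsets
    have h1 : (⋂ i ∈ S, g i ⁻¹' sets i) =ᵐ[μ] (⋂ i ∈ S, (fun ω => h ω i) ⁻¹' sets i) := by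
      rw [Filter.eventuallyEq_set]
      filter_upwards [hae] with ω hω
      simp only [Set.mem_iInter, Set.mem_preimage]
      constructor <;> intro H i hi
      · rw [hω i]; exact H i hi
      · rw [← hω i]; exact H i hi
    rw [measure_congr h1, hind S hsets]
    refine Finset.prod_congr rfl fun i _ => ?_
    refine measure_congr ?_
    rw [Filter.eventuallyEq_set]
    filter_upwards [hgae i] with ω hω
    simp only [Set.mem_preimage, hω]
  have hgd : ∀ i, Measure.map (g i) μ = gaussianReal 0 1 := fun i => by
    rw [← Measure.map_congr (hgae i), hhd i]
  -- rewrite integrand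
  have step1 : (∫ ω, (⨆ x : cube n, Real.exp (c * ∑ i, h ω i * x.val i)) ∂μ) =
      ∫ ω, Real.exp (a * ∑ i, |g i ω|) ∂μ := by
    refine integral_congr_ae ?_
    filter_upwards [hae] with ω hω
    rw [sup_cube hn hc (fun i => h ω i)]
    congr 2
    exact Finset.sum_congr rfl fun i _ => by rw [hω i]
  rw [step1]
  -- independence of |g i|
  have hYind : iIndepFun (fun i ω => |g i ω|) μ :=
    hind'.comp (fun _ x => |x|) (fun _ => measurable_abs)
  have hmgf := hYind.mgf_sum (t := a) (fun i => (hgmeas i).abs) Finset.univ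
  have step2 : ∫ ω, Real.exp (a * ∑ i, |g i ω|) ∂μ =
      mgf (∑ i, fun ω => |g i ω|) μ a := by
    rw [mgf]
    refine integral_congr_ae (Filter.Eventually.of_forall fun ω => ?_)
    simp [Finset.sum_apply]
  rw [step2, hmgf]
  have step3 : ∀ i : Fin n, mgf (fun ω => |g i ω|) μ a =
      2 * Real.exp (c ^ 2 / (2 * n)) * Phi a := by
    intro i
    rw [mgf]
    have : ∫ ω, Real.exp (a * |g i ω|) ∂μ = ∫ x, Real.exp (a * |x|) ∂(Measure.map (g i) μ) := by
      rw [integral_map (hgmeas i).aemeasurable]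
      exact (Continuous.aestronglyMeasurable (by continuity))
    rw [this, hgd i, gauss_abs_integral]
    congr 3
    rw [ha, div_pow, Real.sq_sqrt (Nat.cast_nonneg n)]
    rw [div_div]
    ring_nf
  calc ∏ i : Fin n, mgf (fun ω => |g i ω|) μ a
      = ∏ _i : Fin n, (2 * Real.exp (c ^ 2 / (2 * n)) * Phi a) :=
        Finset.prod_congr rfl fun i _ => step3 i
    _ = (2 * Real.exp (c ^ 2 / (2 * n)) * Phi a) ^ n := by
        rw [Finset.prod_const, Finset.card_univ, Fintype.card_fin]
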